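/- Let U* ∈ R^{d×k} have orthonormal columns with orthogonal complement basis U_⊥*, let U_t ∈ R^{d×k} have orthonormal columns, let Σ ∈ R^{k×k} be any matrix, let N, ξ ∈ R^{d×k}, and suppose Û = U_t(I_k − ηΣ) + ηN + ηξ admits a QR decomposition Û = U_{t+1}P with U_{t+1} orthonormal columns and P invertible upper triangular. Then dist(U_{t+1}, U*) ≤ ‖P⁻¹‖₂ · ( ‖I_k − ηΣ‖₂ · dist(U_t, U*) + η‖N‖₂ + η‖ξ‖₂ ), where dist(A, B) = ‖A_⊥ᵀB‖₂. -/

import Mathlib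

/-!
Since `P` is invertible, `U_{t+1} = Û P⁻¹`, so `‖U_⊥ᵀ U_{t+1}‖ ≤ ‖U_⊥ᵀ Û‖ ‖P⁻¹‖`. Expanding `Û`,
the first term gives `‖U_⊥ᵀ U_t‖ ‖I − ηΣ‖`, and the noise terms lose nothing under `U_⊥ᵀ`, which is
a contraction because `U_⊥` has orthonormal columns (`‖U_⊥‖² = ‖U_⊥ᵀ U_⊥‖ = ‖I‖ ≤ 1`).
-/

open Matrix

/-- Spectral norm (largest singular value) of a real matrix. -/
noncomputable def specNorm {m n : Type*} [Fintype m] [Fintype n] [DecidableEq n]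
    (A : Matrix m n ℝ) : ℝ :=
  ‖LinearMap.toContinuousLinearMap (Matrix.toEuclideanLin A)‖

open scoped Matrix.Norms.L2Operator

namespace Matrix

variable {m n l : Type*} [Fintype m] [Fintype n] [Fintype l] [DecidableEq n]

lemma specNorm_eq_l2_opNorm (A : Matrix m n ℝ) : specNorm A = ‖A‖ := rfl

lemma l2_opNorm_one_le : ‖(1 : Matrix n n ℝ)‖ ≤ 1 := by
  rw [cstar_norm_def, map_one]
  exact ContinuousLinearMap.norm_id_le

lemma l2_opNorm_le_one_of_transpose_mul_self_eq_one [DecidableEq m] {B : Matrix m n ℝ}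
    (hB : Bᵀ * B = 1) : ‖B‖ ≤ 1 := by
  have hsq : ‖B‖ * ‖B‖ ≤ 1 := by
    rw [← l2_opNorm_conjTranspose_mul_self, conjTranspose_eq_transpose_of_trivial, hB]
    exact l2_opNorm_one_le
  nlinarith [norm_nonneg B]

lemma l2_opNorm_transpose_mul_le_of_transpose_mul_self_eq_one [DecidableEq m] [DecidableEq l]
    {B : Matrix m n ℝ} (hB : Bᵀ * B = 1) (X : Matrix m l ℝ) : ‖Bᵀ * X‖ ≤ ‖X‖ := by
  have hBt : ‖Bᵀ‖ ≤ 1 := by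
    rw [← conjTranspose_eq_transpose_of_trivial, l2_opNorm_conjTranspose]
    exact l2_opNorm_le_one_of_transpose_mul_self_eq_one hB
  calc ‖Bᵀ * X‖ ≤ ‖Bᵀ‖ * ‖X‖ := l2_opNorm_mul _ _
    _ ≤ ‖X‖ := mul_le_of_le_one_left (norm_nonneg X) hBt

lemma l2_opNorm_mul_le_of_eq_mul_isUnit {C : Matrix l m ℝ} {A Q : Matrix m n ℝ}
    {P : Matrix n n ℝ} (hA : A = Q * P) (hP : IsUnit P) : ‖C * Q‖ ≤ ‖C * A‖ * ‖P⁻¹‖ := by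
  have hQ : Q = A * P⁻¹ := by
    rw [hA, Matrix.mul_assoc, mul_nonsing_inv P ((isUnit_iff_isUnit_det P).mp hP), Matrix.mul_one]
  rw [hQ, ← Matrix.mul_assoc]
  exact l2_opNorm_mul _ _

end Matrix

theorem stmt7_general (d k r : ℕ)
    (Uperp : Matrix (Fin d) (Fin r) ℝ)
    (Ut Ut1 N ξ : Matrix (Fin d) (Fin k) ℝ)
    (S P : Matrix (Fin k) (Fin k) ℝ) (η : ℝ) (hη : 0 ≤ η)
    (hUperp : Uperpᵀ * Uperp = 1)
    (hPunit : IsUnit P)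
    (hQR : Ut * (1 - η • S) + η • N + η • ξ = Ut1 * P) :
    specNorm (Uperpᵀ * Ut1)
      ≤ specNorm P⁻¹
        * (specNorm (1 - η • S) * specNorm (Uperpᵀ * Ut)
            + η * specNorm N + η * specNorm ξ) := by
  simp only [specNorm_eq_l2_opNorm]
  have hsmul (X : Matrix (Fin d) (Fin k) ℝ) : ‖Uperpᵀ * (η • X)‖ ≤ η * ‖X‖ := by
    rw [Matrix.mul_smul, norm_smul, Real.norm_of_nonneg hη]
    exact mul_le_mul_of_nonneg_left
      (l2_opNorm_transpose_mul_le_of_transpose_mul_self_eq_one hUperp X) hη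
  have hdrift : ‖Uperpᵀ * (Ut * (1 - η • S))‖ ≤ ‖Uperpᵀ * Ut‖ * ‖1 - η • S‖ := by
    rw [← Matrix.mul_assoc]
    exact l2_opNorm_mul _ _
  calc ‖Uperpᵀ * Ut1‖
      ≤ ‖Uperpᵀ * (Ut * (1 - η • S) + η • N + η • ξ)‖ * ‖P⁻¹‖ :=
        l2_opNorm_mul_le_of_eq_mul_isUnit hQR hPunit
    _ ≤ (‖Uperpᵀ * Ut‖ * ‖1 - η • S‖ + η * ‖N‖ + η * ‖ξ‖) * ‖P⁻¹‖ := by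
        gcongr
        rw [Matrix.mul_add, Matrix.mul_add]
        exact (norm_add₃_le ..).trans (add_le_add_three hdrift (hsmul N) (hsmul ξ))
    _ = ‖P⁻¹‖ * (‖1 - η • S‖ * ‖Uperpᵀ * Ut‖ + η * ‖N‖ + η * ‖ξ‖) := by ring

/-- One-step contraction for orthonormalized gradient iterations: if
`Û = U_t(I − ηΣ) + ηN + ηξ = U_{t+1} P` is a QR decomposition with `P` invertible upper
triangular and `U_{t+1}` orthonormal columns, then
`dist(U_{t+1}, U*) ≤ ‖P⁻¹‖₂ (‖I − ηΣ‖₂ dist(U_t, U*) + η‖N‖₂ + η‖ξ‖₂)`,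
where `dist(A, B) = ‖A_⊥ᵀ B‖₂`. -/
theorem stmt7 (d k r : ℕ)
    (Ustar : Matrix (Fin d) (Fin k) ℝ) (Uperp : Matrix (Fin d) (Fin r) ℝ)
    (Ut Ut1 N ξ : Matrix (Fin d) (Fin k) ℝ)
    (S P : Matrix (Fin k) (Fin k) ℝ) (η : ℝ) (hη : 0 ≤ η)
    (hUstar : Ustarᵀ * Ustar = 1) (hUperp : Uperpᵀ * Uperp = 1)
    (hcomp : Ustar * Ustarᵀ + Uperp * Uperpᵀ = 1)
    (hUt : Utᵀ * Ut = 1) (hUt1 : Ut1ᵀ * Ut1 = 1)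
    (hPtri : P.BlockTriangular id) (hPunit : IsUnit P)
    (hQR : Ut * (1 - η • S) + η • N + η • ξ = Ut1 * P) :
    specNorm (Uperpᵀ * Ut1)
      ≤ specNorm P⁻¹
        * (specNorm (1 - η • S) * specNorm (Uperpᵀ * Ut)
            + η * specNorm N + η * specNorm ξ) :=
  stmt7_general d k r Uperp Ut Ut1 N ξ S P η hη hUperp hPunit hQR
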